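/- Let A be a dilation matrix and D a digit set for A containing 0. If T = T(A,D) tiles ℝ^n under translation by ℤ^n and 0 is in the interior of T, then A yields a radix representation of ℤ^n with digit set D. -/

import Mathlib

/-!
The eigenvalues of `A⁻¹` lie in the open unit disc, so by Gelfand's formula `‖A⁻ᵏ‖` is
summable; as `D` is a complete residue system modulo `A`, it is finite, hence `T` is bounded.
Iterating the self-affinity `x ∈ T ↔ ∃ d ∈ D, A x - d ∈ T` gives
`x ∈ T ↔ ∃ q ∈ D_k, Aᵏ x - q ∈ T`, where `D_k = {∑_{j<k} Aʲ dⱼ}`.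
For `z ∈ ℤⁿ` and large `k`, `A⁻ᵏ z` lies in a ball around `0` contained in `T`, so `z - q ∈ T`
for some `q ∈ D_k`. It remains that `T ∩ ℤⁿ = {0}`: if `r ∈ T ∩ ℤⁿ` and `Aᵏ r - q ∈ T`, the
open set `A⁻ᵏ (q + B(0, ε))` lies in `T`, and for large `k` also in `T + r`, which the tiling
forbids unless `r = 0`.
-/

open MeasureTheory Set

/-- `A` is a dilation matrix: an integer matrix all of whose complex
eigenvalues have absolute value greater than 1. -/
def IsDilation {n : ℕ} (A : Matrix (Fin n) (Fin n) ℤ) : Prop :=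
  ∀ μ ∈ spectrum ℂ (A.map (Int.cast : ℤ → ℂ)), 1 < ‖μ‖

/-- `D` is a complete set of coset representatives of `ℤ^n / A(ℤ^n)`. -/
def IsDigitSet {n : ℕ} (A : Matrix (Fin n) (Fin n) ℤ) (D : Set (Fin n → ℤ)) : Prop :=
  ∀ x : Fin n → ℤ, ∃! d : Fin n → ℤ, d ∈ D ∧ ∃ y : Fin n → ℤ, x = A.mulVec y + d

/-- The real matrix corresponding to an integer matrix. -/
noncomputable def realMat {n : ℕ} (A : Matrix (Fin n) (Fin n) ℤ) :
    Matrix (Fin n) (Fin n) ℝ :=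
  A.map (Int.cast : ℤ → ℝ)

/-- Cast an integer vector to a real vector. -/
def castVec {n : ℕ} (d : Fin n → ℤ) : Fin n → ℝ := fun i => (d i : ℝ)

/-- The self-affine set `T(A,D) = { Σ_{j=1}^∞ A^{-j} d_j : d_j ∈ D }`. -/
noncomputable def Tile {n : ℕ} (A : Matrix (Fin n) (Fin n) ℤ) (D : Set (Fin n → ℤ)) :
    Set (Fin n → ℝ) :=
  { x | ∃ f : ℕ → (Fin n → ℤ), (∀ j, f j ∈ D) ∧
      HasSum (fun j => ((realMat A)⁻¹ ^ (j + 1)).mulVec (castVec (f j))) x }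

/-- `A` yields a radix representation with digit set `D`: every integer vector is
a finite sum `Σ_{j=0}^N A^j d_j` with digits in `D`. -/
def YieldsRadix {n : ℕ} (A : Matrix (Fin n) (Fin n) ℤ) (D : Set (Fin n → ℤ)) : Prop :=
  ∀ x : Fin n → ℤ, ∃ N : ℕ, ∃ d : ℕ → (Fin n → ℤ), (∀ j ≤ N, d j ∈ D) ∧
    x = ∑ j ∈ Finset.range (N + 1), (A ^ j).mulVec (d j)

/-- The canonical fundamental domain `F = [-1/2, 1/2)^n`. -/
def Fdom (n : ℕ) : Set (Fin n → ℝ) :=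
  Set.univ.pi fun _ => Set.Ico (-(1/2) : ℝ) (1/2)

/-- The digit set `A(F) ∩ ℤ^n`, viewed as a set of integer vectors. -/
noncomputable def digitF {n : ℕ} (A : Matrix (Fin n) (Fin n) ℤ) : Set (Fin n → ℤ) :=
  { d : Fin n → ℤ | castVec d ∈ (fun v => (realMat A).mulVec v) '' Fdom n }

/-- Multiplication of a Euclidean-space vector by a real matrix,
landing in Euclidean space (so that norms are the `ℓ²` norms). -/
noncomputable def mulVecE {n : ℕ} (B : Matrix (Fin n) (Fin n) ℝ)
    (v : EuclideanSpace ℝ (Fin n)) : EuclideanSpace ℝ (Fin n) :=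
  (WithLp.equiv 2 (Fin n → ℝ)).symm (B.mulVec ((WithLp.equiv 2 (Fin n → ℝ)) v))

/-- The smallest singular value of `A` is greater than `c`: equivalently,
`‖Av‖ > c` for every unit vector `v` (Euclidean norm). -/
noncomputable def MinSingValGT {n : ℕ} (A : Matrix (Fin n) (Fin n) ℤ) (c : ℝ) : Prop :=
  ∀ v : EuclideanSpace ℝ (Fin n), ‖v‖ = 1 → c < ‖mulVecE (realMat A) v‖

/-- Vectors expressible by a radix expansion of length at most `k`. -/
def DAk {n : ℕ} (A : Matrix (Fin n) (Fin n) ℤ) (D : Set (Fin n → ℤ)) (k : ℕ) :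
    Set (Fin n → ℤ) :=
  { x : Fin n → ℤ | ∃ d : ℕ → (Fin n → ℤ), (∀ j < k, d j ∈ D) ∧
      x = ∑ j ∈ Finset.range k, (A ^ j).mulVec (d j) }

/-- `T` tiles `ℝ^n` under translation by `ℤ^n`. -/
def TilesRn {n : ℕ} (T : Set (Fin n → ℝ)) : Prop :=
  (⋃ k : Fin n → ℤ, (fun x => x + castVec k) '' T) = Set.univ ∧
  ∀ k₁ k₂ : Fin n → ℤ, k₁ ≠ k₂ →
    volume (((fun x => x + castVec k₁) '' T) ∩ ((fun x => x + castVec k₂) '' T)) = 0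

open Filter Matrix Metric Topology

attribute [local instance] Matrix.linftyOpNormedRing Matrix.linftyOpNormedAlgebra

theorem summable_norm_pow_of_spectralRadius_lt_one {𝔸 : Type*} [NormedRing 𝔸]
    [NormedAlgebra ℂ 𝔸] [CompleteSpace 𝔸] {a : 𝔸} (ha : spectralRadius ℂ a < 1) :
    Summable fun k => ‖a ^ k‖ := by
  obtain ⟨c, hac, hc1⟩ := ENNReal.lt_iff_exists_nnreal_btwn.mp ha
  refine Summable.of_norm_bounded_eventually_nat
    (summable_geometric_of_lt_one c.coe_nonneg (by exact_mod_cast hc1)) ?_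
  filter_upwards [(spectrum.pow_norm_pow_one_div_tendsto_nhds_spectralRadius a).eventually_lt_const
    hac, eventually_ne_atTop 0] with k hk hk0
  rw [ENNReal.ofReal_lt_coe_iff (by positivity), one_div] at hk
  rw [norm_norm, ← Real.rpow_inv_natCast_pow (norm_nonneg (a ^ k)) hk0]
  exact pow_le_pow_left₀ (by positivity) hk.le k

theorem hasSum_mulVec {ι m p : Type*} [Fintype p] {f : ι → p → ℝ} {x : p → ℝ}
    (Q : Matrix m p ℝ) (h : HasSum f x) : HasSum (fun i => Q *ᵥ f i) (Q *ᵥ x) :=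
  h.mapL (Matrix.mulVecLin Q).toContinuousLinearMap

theorem norm_map_ofReal {m : Type*} [Fintype m] [DecidableEq m] (X : Matrix m m ℝ) :
    ‖X.map Complex.ofRealHom‖ = ‖X‖ := by
  simp [Matrix.linfty_opNorm_def]

section

variable {n : ℕ} {A : Matrix (Fin n) (Fin n) ℤ} {D : Set (Fin n → ℤ)}

theorem norm_castVec (v : Fin n → ℤ) : ‖castVec v‖ = ‖v‖ := by
  simp only [castVec, Pi.norm_def]
  congr 2

theorem castVec_add (v w : Fin n → ℤ) : castVec (v + w) = castVec v + castVec w := by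
  funext i; simp [castVec]

theorem castVec_sub (v w : Fin n → ℤ) : castVec (v - w) = castVec v - castVec w := by
  funext i; simp [castVec]

theorem castVec_zero : castVec (0 : Fin n → ℤ) = 0 := by
  funext i; simp [castVec]

theorem castVec_mulVec (A : Matrix (Fin n) (Fin n) ℤ) (v : Fin n → ℤ) :
    castVec (A *ᵥ v) = realMat A *ᵥ castVec v :=
  funext fun i => (Int.castRingHom ℝ).map_mulVec A v i

theorem realMat_pow (A : Matrix (Fin n) (Fin n) ℤ) (k : ℕ) : realMat (A ^ k) = realMat A ^ k :=
  Matrix.map_pow A (Int.castRingHom ℝ) k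

theorem det_realMat (A : Matrix (Fin n) (Fin n) ℤ) : (realMat A).det = A.det :=
  ((Int.castRingHom ℝ).map_det A).symm

theorem realMat_mul_inv (hA : A.det ≠ 0) : realMat A * (realMat A)⁻¹ = 1 :=
  Matrix.mul_nonsing_inv _ (by simpa [det_realMat] using hA)

theorem inv_mul_realMat (hA : A.det ≠ 0) : (realMat A)⁻¹ * realMat A = 1 :=
  Matrix.nonsing_inv_mul _ (by simpa [det_realMat] using hA)

theorem IsDilation.det_ne_zero (hA : IsDilation A) : A.det ≠ 0 := by
  intro h
  have h0 : (0 : ℂ) ∈ spectrum ℂ (A.map (Int.cast : ℤ → ℂ)) := by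
    rw [spectrum.zero_mem_iff, Matrix.isUnit_iff_isUnit_det, isUnit_iff_ne_zero, not_not]
    simpa [h] using ((Int.castRingHom ℂ).map_det A).symm
  exact absurd (hA 0 h0) (by norm_num)

theorem IsDilation.summable_norm_inv_pow (hA : IsDilation A) :
    Summable fun k => ‖(realMat A)⁻¹ ^ k‖ := by
  set f := (Complex.ofRealHom : ℝ →+* ℂ).mapMatrix (m := Fin n)
  have hdet := hA.det_ne_zero
  let u : (Matrix (Fin n) (Fin n) ℂ)ˣ :=
    ⟨f (realMat A), f (realMat A)⁻¹, by rw [← map_mul, realMat_mul_inv hdet, map_one],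
      by rw [← map_mul, inv_mul_realMat hdet, map_one]⟩
  have hu : (u : Matrix (Fin n) (Fin n) ℂ) = A.map (Int.cast : ℤ → ℂ) := by
    ext i j; simp [u, f, realMat]
  have hspec : spectralRadius ℂ (↑u⁻¹ : Matrix (Fin n) (Fin n) ℂ) < 1 := by
    rcases (spectrum ℂ (↑u⁻¹ : Matrix (Fin n) (Fin n) ℂ)).eq_empty_or_nonempty with h | h
    · rw [spectralRadius, h]; simp
    refine spectrum.spectralRadius_lt_of_forall_lt_of_nonempty h fun μ hμ => ?_
    have h1 : 1 < ‖μ⁻¹‖ := hA _ (hu ▸ spectrum.inv₀_mem_iff.mpr hμ)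
    rw [norm_inv] at h1
    rw [← NNReal.coe_lt_coe, coe_nnnorm, NNReal.coe_one]
    by_contra! h2
    exact (inv_le_one_of_one_le₀ h2).not_gt h1
  refine (summable_norm_pow_of_spectralRadius_lt_one hspec).congr fun k => ?_
  rw [← norm_map_ofReal]
  show ‖f (realMat A)⁻¹ ^ k‖ = ‖f ((realMat A)⁻¹ ^ k)‖
  rw [map_pow]

theorem exists_norm_castVec_sub_mulVec_le (hA : A.det ≠ 0) (x : Fin n → ℤ) :
    ∃ y, ‖castVec (x - A *ᵥ y)‖ ≤ ‖realMat A‖ / 2 := by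
  set v := (realMat A)⁻¹ *ᵥ castVec x
  refine ⟨fun i => round (v i), ?_⟩
  have h : castVec (x - A *ᵥ fun i => round (v i)) =
      realMat A *ᵥ (v - castVec fun i => round (v i)) := by
    rw [castVec_sub, castVec_mulVec, mulVec_sub, mulVec_mulVec, realMat_mul_inv hA, one_mulVec]
  have hround : ‖v - castVec fun i => round (v i)‖ ≤ 1 / 2 :=
    (pi_norm_le_iff_of_nonneg (by norm_num)).mpr fun i => abs_sub_round (v i)
  rw [h]
  calc _ ≤ ‖realMat A‖ * ‖v - castVec fun i => round (v i)‖ := linfty_opNorm_mulVec _ _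
    _ ≤ ‖realMat A‖ * (1 / 2) := by gcongr
    _ = _ := by ring

theorem IsDigitSet.finite (hA : A.det ≠ 0) (hD : IsDigitSet A D) : D.Finite := by
  choose y hy using exists_norm_castVec_sub_mulVec_le hA
  refine Set.Finite.of_finite_image (f := fun d => d - A *ᵥ y d) ?_ ?_
  · refine (isCompact_closedBall (0 : Fin n → ℤ) (‖realMat A‖ / 2)).finite_of_discrete.subset ?_
    rintro _ ⟨d, -, rfl⟩
    simpa [norm_castVec] using hy d
  · intro d hd d' hd' h
    obtain ⟨e, -, he⟩ := hD d
    rw [he d ⟨hd, 0, by simp⟩, he d' ⟨hd', y d - y d', by rw [mulVec_sub]; linear_combination h⟩]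

theorem isBounded_tile (hB : Summable fun k => ‖(realMat A)⁻¹ ^ k‖) (hD : D.Finite) :
    Bornology.IsBounded (Tile A D) := by
  obtain ⟨c, hc⟩ := (hD.image fun d => ‖castVec d‖).bddAbove
  rw [isBounded_iff_forall_norm_le]
  refine ⟨(∑' k, ‖(realMat A)⁻¹ ^ (k + 1)‖) * c, ?_⟩
  rintro x ⟨f, hf, hx⟩
  refine hx.norm_le_of_bounded (((summable_nat_add_iff 1).mpr hB).hasSum.mul_right c) fun j => ?_
  exact (linfty_opNorm_mulVec _ _).trans
    (mul_le_mul_of_nonneg_left (hc ⟨f j, hf j, rfl⟩) (norm_nonneg _))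

theorem hasSum_expansion_iff_shift (hA : A.det ≠ 0) (f : ℕ → Fin n → ℤ) (x : Fin n → ℝ) :
    HasSum (fun j => ((realMat A)⁻¹ ^ (j + 1)) *ᵥ castVec (f j)) x ↔
      HasSum (fun j => ((realMat A)⁻¹ ^ (j + 1)) *ᵥ castVec (f (j + 1)))
        (realMat A *ᵥ x - castVec (f 0)) := by
  set B := (realMat A)⁻¹
  have hx : x - B *ᵥ castVec (f 0) = B *ᵥ (realMat A *ᵥ x - castVec (f 0)) := by
    rw [mulVec_sub, mulVec_mulVec, inv_mul_realMat hA, one_mulVec]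
  rw [← hasSum_nat_add_iff' 1]
  simp only [Finset.sum_range_one, zero_add, pow_one, pow_succ' B (_ + 1), ← mulVec_mulVec, hx]
  have hAB : realMat A * B = 1 := realMat_mul_inv hA
  refine ⟨fun h => ?_, hasSum_mulVec B⟩
  simpa only [mulVec_mulVec, ← mul_assoc, hAB, one_mul, one_mulVec] using
    hasSum_mulVec (realMat A) h

theorem mem_tile_iff (hA : A.det ≠ 0) {x : Fin n → ℝ} :
    x ∈ Tile A D ↔ ∃ d ∈ D, realMat A *ᵥ x - castVec d ∈ Tile A D := by
  constructor
  · rintro ⟨f, hf, hx⟩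
    exact ⟨f 0, hf 0, fun j => f (j + 1), fun j => hf (j + 1),
      (hasSum_expansion_iff_shift hA f x).mp hx⟩
  · rintro ⟨d, hd, e, he, hx⟩
    refine ⟨fun j => Nat.rec (motive := fun _ => Fin n → ℤ) d (fun j _ => e j) j, ?_,
      (hasSum_expansion_iff_shift hA _ x).mpr hx⟩
    rintro (_ | j)
    exacts [hd, he j]

theorem mem_DAk_zero {x : Fin n → ℤ} : x ∈ DAk A D 0 ↔ x = 0 := by
  simp [DAk]

theorem mem_DAk_succ {k : ℕ} {x : Fin n → ℤ} :
    x ∈ DAk A D (k + 1) ↔ ∃ q ∈ DAk A D k, ∃ d ∈ D, x = q + (A ^ k) *ᵥ d := by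
  constructor
  · rintro ⟨f, hf, rfl⟩
    exact ⟨_, ⟨f, fun j hj => hf j (by omega), rfl⟩, f k, hf k k.lt_succ_self,
      Finset.sum_range_succ _ _⟩
  · rintro ⟨_, ⟨f, hf, rfl⟩, d, hd, rfl⟩
    refine ⟨Function.update f k d, fun j hj => ?_, ?_⟩
    · rcases (Nat.lt_succ_iff_lt_or_eq.mp hj) with hj | rfl
      · simpa [Function.update_of_ne hj.ne] using hf j hj
      · simpa using hd
    · rw [Finset.sum_range_succ, Function.update_self]
      congr 1
      refine Finset.sum_congr rfl fun j hj => ?_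
      rw [Function.update_of_ne (Finset.mem_range.mp hj).ne]

theorem mem_tile_iff_exists_mem_DAk (hA : A.det ≠ 0) (k : ℕ) {x : Fin n → ℝ} :
    x ∈ Tile A D ↔ ∃ q ∈ DAk A D k, (realMat A ^ k) *ᵥ x - castVec q ∈ Tile A D := by
  induction k generalizing x with
  | zero => simp [mem_DAk_zero, castVec_zero]
  | succ k ih =>
    have key : ∀ q d, (realMat A ^ k) *ᵥ (realMat A *ᵥ x - castVec d) - castVec q =
        (realMat A ^ (k + 1)) *ᵥ x - castVec (q + (A ^ k) *ᵥ d) := by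
      intro q d
      rw [castVec_add, castVec_mulVec, realMat_pow, mulVec_sub, mulVec_mulVec, ← pow_succ]
      abel
    rw [mem_tile_iff hA]
    constructor
    · rintro ⟨d, hd, h⟩
      obtain ⟨q, hq, h⟩ := ih.mp h
      exact ⟨_, mem_DAk_succ.mpr ⟨q, hq, d, hd, rfl⟩, key q d ▸ h⟩
    · rintro ⟨_, hq', h⟩
      obtain ⟨q, hq, d, hd, rfl⟩ := mem_DAk_succ.mp hq'
      exact ⟨d, hd, ih.mpr ⟨q, hq, (key q d).symm ▸ h⟩⟩

theorem eq_zero_of_castVec_mem_tile (hA : A.det ≠ 0)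
    (hB : Tendsto (fun k => ‖(realMat A)⁻¹ ^ k‖) atTop (𝓝 0))
    (hT : Bornology.IsBounded (Tile A D)) (htile : TilesRn (Tile A D))
    (hint : (0 : Fin n → ℝ) ∈ interior (Tile A D)) {r : Fin n → ℤ}
    (hr : castVec r ∈ Tile A D) : r = 0 := by
  by_contra hr0
  set B := (realMat A)⁻¹
  obtain ⟨ε, hε, hball⟩ := Metric.mem_nhds_iff.mp (mem_interior_iff_mem_nhds.mp hint)
  obtain ⟨R, hR⟩ := hT.exists_norm_le
  obtain ⟨k, hk⟩ : ∃ k, ‖B ^ k‖ * (ε + R) < ε :=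
    ((hB.mul_const (ε + R)).eventually (gt_mem_nhds (by simpa using hε))).exists
  obtain ⟨q, hq, hrq⟩ := (mem_tile_iff_exists_mem_DAk hA k).mp hr
  have hAB : realMat A ^ k * B ^ k = 1 := pow_mul_pow_eq_one k (realMat_mul_inv hA)
  have hBA : B ^ k * realMat A ^ k = 1 := pow_mul_pow_eq_one k (inv_mul_realMat hA)
  set U := {u | (realMat A ^ k) *ᵥ u - castVec q ∈ ball 0 ε}
  have hU_open : IsOpen U :=
    isOpen_ball.preimage ((continuous_const.matrix_mulVec continuous_id).sub continuous_const)
  have hU_ne : (B ^ k *ᵥ castVec q) ∈ U := by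
    simpa [U, mulVec_mulVec, hAB] using hε
  have hUT : U ⊆ Tile A D := fun u hu =>
    (mem_tile_iff_exists_mem_DAk hA k).mpr ⟨q, hq, hball hu⟩
  have hUr : U ⊆ (fun x => x + castVec r) '' Tile A D := by
    intro u hu
    refine ⟨u - castVec r, hball ?_, sub_add_cancel _ _⟩
    have hu' : ‖(realMat A ^ k) *ᵥ u - castVec q‖ < ε := mem_ball_zero_iff.mp hu
    have heq : u - castVec r = B ^ k *ᵥ (((realMat A ^ k) *ᵥ u - castVec q) -
        ((realMat A ^ k) *ᵥ castVec r - castVec q)) := by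
      rw [sub_sub_sub_cancel_right, ← mulVec_sub, mulVec_mulVec, hBA, one_mulVec]
    rw [mem_ball_zero_iff, heq]
    calc _ ≤ ‖B ^ k‖ * ‖((realMat A ^ k) *ᵥ u - castVec q) -
            ((realMat A ^ k) *ᵥ castVec r - castVec q)‖ := linfty_opNorm_mulVec _ _
      _ ≤ ‖B ^ k‖ * (ε + R) := by
        gcongr
        exact (norm_sub_le _ _).trans (add_le_add hu'.le (hR _ hrq))
      _ < ε := hk
  have hdisj := htile.2 0 r (Ne.symm hr0)
  simp only [castVec_zero, add_zero, image_id'] at hdisj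
  exact (hU_open.measure_pos volume ⟨_, hU_ne⟩).ne'
    (measure_mono_null (subset_inter hUT hUr) hdisj)

end

theorem stmt_13_general {n : ℕ} (A : Matrix (Fin n) (Fin n) ℤ) (D : Set (Fin n → ℤ))
    (hA : IsDilation A) (hD : IsDigitSet A D)
    (htile : TilesRn (Tile A D)) (hint : (0 : Fin n → ℝ) ∈ interior (Tile A D)) :
    YieldsRadix A D := by
  have hdet := hA.det_ne_zero
  have hB := hA.summable_norm_inv_pow
  have hT := isBounded_tile hB (hD.finite hdet)
  intro z
  obtain ⟨ε, hε, hball⟩ := Metric.mem_nhds_iff.mp (mem_interior_iff_mem_nhds.mp hint)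
  obtain ⟨N, hN⟩ : ∃ N, ‖(realMat A)⁻¹ ^ (N + 1)‖ * ‖castVec z‖ < ε :=
    (((tendsto_add_atTop_iff_nat 1).mpr hB.tendsto_atTop_zero).mul_const ‖castVec z‖
      |>.eventually (gt_mem_nhds (by simpa using hε))).exists
  have hzT : ((realMat A)⁻¹ ^ (N + 1)) *ᵥ castVec z ∈ Tile A D :=
    hball (mem_ball_zero_iff.mpr ((linfty_opNorm_mulVec _ _).trans_lt hN))
  obtain ⟨_, ⟨d, hd, rfl⟩, hq⟩ := (mem_tile_iff_exists_mem_DAk hdet (N + 1)).mp hzT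
  rw [mulVec_mulVec, pow_mul_pow_eq_one _ (realMat_mul_inv hdet), one_mulVec,
    ← castVec_sub] at hq
  exact ⟨N, d, fun j hj => hd j (Nat.lt_succ_of_le hj),
    sub_eq_zero.mp (eq_zero_of_castVec_mem_tile hdet hB.tendsto_atTop_zero hT htile hint hq)⟩

/-- if `T(A,D)` tiles `ℝ^n` by `ℤ^n`-translations and `0 ∈ T°`,
then `A` yields a radix representation with digit set `D`. -/
theorem stmt_13 {n : ℕ} (A : Matrix (Fin n) (Fin n) ℤ) (D : Set (Fin n → ℤ))
    (hA : IsDilation A) (hD : IsDigitSet A D) (h0 : (0 : Fin n → ℤ) ∈ D)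
    (htile : TilesRn (Tile A D)) (hint : (0 : Fin n → ℝ) ∈ interior (Tile A D)) :
    YieldsRadix A D :=
  stmt_13_general A D hA hD htile hint
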